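/- arXiv:2501.04311 — 5 statements merged into one kernel-verified Lean document; each statement's English description precedes it below -/
import Mathlib

section
/- For all x in the interval [-2, 0), the function g(x) := 2x - 2x^2 - (4/3)x^3 + (7/5)·θ·(-x^2 - 2x)^{3/2} is strictly negative, where θ := sqrt(5 - π²/3). -/
/-!
Write `y = -x² - 2x = (-x)(2 + x) ≥ 0` and `q = 2 - 2x - (4/3)x²`, so that the polynomial part is
`-(-x) q` with `q > 0` on `[-2, 0)`. Both competing terms are nonnegative, so it suffices to compare
squares: since `(49/25) θ² ≤ 84/25` (from `π > 3.14`), the square of the radical term is at most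
`(84/25) y³ = x² · (84/25)(-x)(2 + x)³`, and the quartic `(84/25)(-x)(2 + x)³` lies strictly below `q²`
for every real `x`.
-/

open Real

lemma five_sub_pi_sq_div_three_le : 5 - π ^ 2 / 3 ≤ 12 / 7 := by
  nlinarith [pi_gt_d2]

lemma rpow_three_halves_sq {y : ℝ} (hy : 0 ≤ y) : (y ^ ((3 : ℝ) / 2)) ^ 2 = y ^ 3 := by
  rw [← rpow_mul_natCast hy]
  norm_num

lemma quartic_lt_sq (x : ℝ) :
    84 / 25 * (-x) * (2 + x) ^ 3 < (2 - 2 * x - 4 / 3 * x ^ 2) ^ 2 := by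
  nlinarith [sq_nonneg (x + 1 / 2), sq_nonneg (x + 2), sq_nonneg (x * (x + 2)),
    sq_nonneg (x ^ 2 + x)]

theorem stmt_0 :
    ∀ x ∈ Set.Ico (-2 : ℝ) 0,
      2*x - 2*x^2 - (4/3)*x^3
        + (7/5) * Real.sqrt (5 - Real.pi^2/3) * (-x^2 - 2*x) ^ ((3:ℝ)/2) < 0 := by
  rintro x ⟨hx₂, hx₀⟩
  set θ := √(5 - π ^ 2 / 3)
  set y := -x ^ 2 - 2 * x
  have hy : 0 ≤ y := by nlinarith
  have hq : 0 < 2 - 2 * x - 4 / 3 * x ^ 2 := by nlinarith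
  have hθ : θ ^ 2 = 5 - π ^ 2 / 3 := sq_sqrt (by nlinarith [pi_pos, pi_lt_d2])
  have hsq : (7 / 5 * θ * y ^ ((3 : ℝ) / 2)) ^ 2 < (-x * (2 - 2 * x - 4 / 3 * x ^ 2)) ^ 2 :=
    calc (7 / 5 * θ * y ^ ((3 : ℝ) / 2)) ^ 2 = 49 / 25 * θ ^ 2 * y ^ 3 := by
          rw [mul_pow, mul_pow, rpow_three_halves_sq hy]; ring
      _ ≤ 84 / 25 * y ^ 3 := by
          gcongr; linarith [five_sub_pi_sq_div_three_le]
      _ = x ^ 2 * (84 / 25 * (-x) * (2 + x) ^ 3) := by ring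
      _ < x ^ 2 * (2 - 2 * x - 4 / 3 * x ^ 2) ^ 2 := by
          gcongr
          · nlinarith
          · exact quartic_lt_sq x
      _ = (-x * (2 - 2 * x - 4 / 3 * x ^ 2)) ^ 2 := by ring
  have hlt := (pow_lt_pow_iff_left₀ (by positivity) (by nlinarith) two_ne_zero).1 hsq
  linarith
end

section
/- Suppose x* ∈ ((-3+√5)/2, 0) satisfies sqrt(1-(1+x*)²) = (5/(21θ))·(2 - 4x* - 4x*²)/(1+x*) with θ = sqrt(5-π²/3). Then g(x*) = 2x*(x*² + 3x* + 1)/(3(1+x*)), where g(x) = 2x - 2x² - (4/3)x³ + (7/5)θ(-x²-2x)^{3/2}. Moreover 2x(x²+3x+1)/(3(1+x)) < 0 for all x ∈ ((-3+√5)/2, 0). -/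
/-!
On the interval, `-x² - 2x = 1 - (1 + x)² > 0`, so `(-x² - 2x)^(3/2) = (-x² - 2x) · √(-x² - 2x)`,
and the critical-point equation replaces the square root by a rational function of `x` in which
`θ` cancels. The sign claim holds because `(-3 + √5)/2` is the larger root of `y² + 3y + 1` and
exceeds `-1`, so on the interval the numerator is negative and the denominator positive.
-/

open Real

lemma one_add_pos_of_root_lt {y : ℝ} (hy : (-3 + √5) / 2 < y) : 0 < 1 + y := by
  have h5 : 1 < √5 := lt_sqrt_of_sq_lt (by norm_num)
  linarith

lemma sq_add_three_mul_add_one_pos_of_root_lt {y : ℝ} (hy : (-3 + √5) / 2 < y) :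
    0 < y ^ 2 + 3 * y + 1 := by
  have h5 : √5 ^ 2 = 5 := sq_sqrt (by norm_num)
  nlinarith [sqrt_nonneg 5, sq_nonneg (2 * y + 3 - √5)]

lemma rpow_three_halves_eq_mul_sqrt {a : ℝ} (ha : 0 ≤ a) : a ^ ((3 : ℝ) / 2) = a * √a := by
  rw [show (3 : ℝ) / 2 = 1 + 1 / 2 by norm_num, rpow_add' ha (by norm_num), rpow_one,
    ← sqrt_eq_rpow]

lemma sqrt_five_sub_pi_sq_div_three_pos : 0 < √(5 - π ^ 2 / 3) :=
  sqrt_pos.mpr (by nlinarith [pi_lt_d2, pi_pos])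

lemma value_at_critical_point {θ x : ℝ} (hθ : θ ≠ 0) (hx : 0 ≤ -x ^ 2 - 2 * x) (hx1 : 1 + x ≠ 0)
    (hcrit : √(1 - (1 + x) ^ 2) = (5 / (21 * θ)) * (2 - 4 * x - 4 * x ^ 2) / (1 + x)) :
    2 * x - 2 * x ^ 2 - (4 / 3) * x ^ 3 + (7 / 5) * θ * (-x ^ 2 - 2 * x) ^ ((3 : ℝ) / 2)
      = 2 * x * (x ^ 2 + 3 * x + 1) / (3 * (1 + x)) := by
  have hsqrt : √(-x ^ 2 - 2 * x) = (5 / (21 * θ)) * (2 - 4 * x - 4 * x ^ 2) / (1 + x) := by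
    rw [← hcrit]; ring_nf
  rw [rpow_three_halves_eq_mul_sqrt hx, hsqrt]
  field_simp
  ring

lemma critical_value_neg {y : ℝ} (hy : y ∈ Set.Ioo ((-3 + √5) / 2) 0) :
    2 * y * (y ^ 2 + 3 * y + 1) / (3 * (1 + y)) < 0 := by
  have hq := sq_add_three_mul_add_one_pos_of_root_lt hy.1
  have h1 := one_add_pos_of_root_lt hy.1
  exact div_neg_of_neg_of_pos (by nlinarith [hy.2]) (by linarith)

theorem stmt_3 (θ : ℝ) (hθ : θ = Real.sqrt (5 - Real.pi^2/3))
    (g : ℝ → ℝ)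
    (hg : ∀ x, g x = 2*x - 2*x^2 - (4/3)*x^3 + (7/5)*θ*(-x^2 - 2*x) ^ ((3:ℝ)/2))
    (x : ℝ) (hx : x ∈ Set.Ioo ((-3 + Real.sqrt 5)/2) (0 : ℝ))
    (hcrit : Real.sqrt (1 - (1 + x)^2) = (5/(21*θ)) * (2 - 4*x - 4*x^2)/(1 + x)) :
    g x = 2*x*(x^2 + 3*x + 1)/(3*(1 + x)) ∧
    ∀ y ∈ Set.Ioo ((-3 + Real.sqrt 5)/2) (0 : ℝ),
      2*y*(y^2 + 3*y + 1)/(3*(1 + y)) < 0 := by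
  have hθ0 : θ ≠ 0 := hθ ▸ sqrt_five_sub_pi_sq_div_three_pos.ne'
  have hx1 := one_add_pos_of_root_lt hx.1
  have hx0 : 0 ≤ -x ^ 2 - 2 * x := by nlinarith [hx.2]
  exact ⟨(hg x).trans (value_at_critical_point hθ0 hx0 hx1.ne' hcrit),
    fun y hy => critical_value_neg hy⟩
end

section
/- Define E(Z₁,Z₂) := Z₁² + Z₂² + 2Z₁ and P_δ(Z₁,Z₂) := (1+δ)(Z₁²+Z₂²) + 2Z₁Z₂² + (2/3)Z₁³ + 6δ(|Z₁|Z₂² + |Z₁|³) - 2(1 - δ - ((2/3)+δ)·(21/20)·θ·Z₂)·Z₂², with θ = sqrt(5-π²/3). There exist δ₂, δ₃ > 0 such that for all 0 < δ < δ₂ and all (Z₁,Z₂) ∈ ℝ² with |E(Z₁,Z₂)| ≤ δ₃, one has P_δ(Z₁,Z₂) - (1/δ)|E(Z₁,Z₂)|² ≤ 0. -/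
/-!
On the circle `E = 0`, i.e. `Z₂² = 2t - t²` with `t = -Z₁ ∈ [0, 2]`, the `δ = 0` part of `P` is
`-2t - 2t² + (4/3)t³ + (7/5)θZ₂³`. This is negative for `t > 0`: `(7/5)θ < 11/6` and, by AM–GM,
`|Z₂|³ ≤ (5/8)Z₂²(Z₂² + 16/25)`, which leaves a polynomial inequality in `t`. The `δ`-dependent
terms are `O(δ(Z₁² + Z₂²))`, so `P_δ ≤ 0` when `|E|` is small, away from the origin. Near the
origin `P_δ ≈ Z₁² - Z₂²`, and `Z₁²` is controlled by `E² ≈ 4Z₁²`. Hence `P_δ ≤ E² ≤ E²/δ`.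
-/

open Real

noncomputable def circleDefect (Z₁ Z₂ : ℝ) : ℝ := Z₁ ^ 2 + Z₂ ^ 2 + 2 * Z₁

noncomputable def pMajorant (κ η Z₁ Z₂ : ℝ) : ℝ :=
  Z₁ ^ 2 - Z₂ ^ 2 + 2 * Z₁ * Z₂ ^ 2 + (2 / 3) * Z₁ ^ 3 + κ * |Z₂| ^ 3 + η * (Z₁ ^ 2 + Z₂ ^ 2)

lemma sqrt_five_sub_pi_sq_div_three_le : √(5 - π ^ 2 / 3) ≤ 55 / 42 :=
  sqrt_le_iff.2 ⟨by norm_num, by nlinarith [pi_gt_d2]⟩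

lemma two_mul_mul_abs_pow_three_le (c x : ℝ) : 2 * c * |x| ^ 3 ≤ x ^ 2 * (x ^ 2 + c ^ 2) := by
  have h := mul_nonneg (sq_nonneg x) (sq_nonneg (|x| - c))
  rw [← sq_abs x] at h ⊢
  nlinarith

lemma abs_le_three_of_circleDefect_le_one {Z₁ Z₂ : ℝ} (h : circleDefect Z₁ Z₂ ≤ 1) :
    |Z₁| ≤ 3 ∧ |Z₂| ≤ 3 := by
  unfold circleDefect at h
  constructor <;> rw [abs_le] <;> constructor <;> nlinarith [sq_nonneg (Z₁ + 1), sq_nonneg Z₂]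

lemma le_pMajorant {δ θ Z₁ Z₂ : ℝ} (hδ : 0 ≤ δ) (hθ₀ : 0 ≤ θ) (hθ : θ ≤ 2)
    (h₁ : |Z₁| ≤ 3) (h₂ : |Z₂| ≤ 3) :
    (1 + δ) * (Z₁ ^ 2 + Z₂ ^ 2) + 2 * Z₁ * Z₂ ^ 2 + (2 / 3) * Z₁ ^ 3
        + 6 * δ * (|Z₁| * Z₂ ^ 2 + |Z₁| ^ 3)
        - 2 * (1 - δ - ((2 / 3) + δ) * (21 / 20) * θ * Z₂) * Z₂ ^ 2
      ≤ pMajorant ((7 / 5) * θ) (40 * δ) Z₁ Z₂ := by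
  have hZ₂ : Z₂ * Z₂ ^ 2 ≤ |Z₂| ^ 3 := by
    rw [← sq_abs Z₂]; nlinarith [le_abs_self Z₂, sq_nonneg |Z₂|]
  have habs₁ : |Z₁| * Z₂ ^ 2 ≤ 3 * Z₂ ^ 2 := by nlinarith [sq_nonneg Z₂]
  have habs₁' : |Z₁| ^ 3 ≤ 3 * Z₁ ^ 2 := by
    rw [← sq_abs Z₁]; nlinarith [abs_nonneg Z₁, sq_nonneg |Z₁|]
  have habs₂ : θ * |Z₂| ^ 3 ≤ 6 * Z₂ ^ 2 := by
    rw [← sq_abs Z₂]; nlinarith [abs_nonneg Z₂, sq_nonneg |Z₂|, mul_nonneg hθ₀ (sq_nonneg |Z₂|)]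
  unfold pMajorant
  nlinarith [mul_nonneg hδ (sub_nonneg.2 habs₁), mul_nonneg hδ (sub_nonneg.2 habs₁'),
    mul_nonneg hδ (sub_nonneg.2 habs₂), mul_nonneg hθ₀ (sub_nonneg.2 hZ₂),
    mul_nonneg (mul_nonneg hδ hθ₀) (sub_nonneg.2 hZ₂), mul_nonneg hδ (sq_nonneg Z₁),
    mul_nonneg hδ (sq_nonneg Z₂)]

section
variable {κ η Z₁ Z₂ : ℝ}

lemma pMajorant_le_sq_of_near (hκ : κ ≤ 11 / 6) (hη : η ≤ 1e-3)
    (h₁ : |Z₁| ≤ 1 / 20) (h₂ : |Z₂| ≤ 1 / 20) :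
    pMajorant κ η Z₁ Z₂ ≤ circleDefect Z₁ Z₂ ^ 2 := by
  obtain ⟨h₁l, h₁u⟩ := abs_le.1 h₁
  have hs : 0 ≤ Z₁ ^ 2 + Z₂ ^ 2 := by positivity
  have hcross : 2 * Z₁ * Z₂ ^ 2 ≤ (1 / 10) * Z₂ ^ 2 := by nlinarith [sq_nonneg Z₂]
  have hcube₁ : (2 / 3) * Z₁ ^ 3 ≤ (1 / 30) * Z₁ ^ 2 := by nlinarith [sq_nonneg Z₁]
  have hcube₂ : κ * |Z₂| ^ 3 ≤ (11 / 120) * Z₂ ^ 2 := by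
    rw [← sq_abs Z₂]; nlinarith [abs_nonneg Z₂, sq_nonneg |Z₂|, pow_nonneg (abs_nonneg Z₂) 3]
  have hpen : η * (Z₁ ^ 2 + Z₂ ^ 2) ≤ 1e-3 * (Z₁ ^ 2 + Z₂ ^ 2) :=
    mul_le_mul_of_nonneg_right hη hs
  have hD : 4 * Z₁ ^ 2 - (1 / 5) * (Z₁ ^ 2 + Z₂ ^ 2) ≤ circleDefect Z₁ Z₂ ^ 2 := by
    have : circleDefect Z₁ Z₂ ^ 2
        = 4 * Z₁ ^ 2 + 4 * Z₁ * (Z₁ ^ 2 + Z₂ ^ 2) + (Z₁ ^ 2 + Z₂ ^ 2) ^ 2 := by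
      rw [circleDefect]; ring
    nlinarith [mul_nonneg (by linarith : 0 ≤ Z₁ + 1 / 20) hs]
  unfold pMajorant
  linarith [sq_nonneg Z₁, sq_nonneg Z₂]

lemma pMajorant_nonpos_of_far (hκ : κ ≤ 11 / 6) (hη : η ≤ 1e-3)
    (hD : |circleDefect Z₁ Z₂| ≤ 1e-5) (hZ₁ : 1 / 1000 ≤ -Z₁) :
    pMajorant κ η Z₁ Z₂ ≤ 0 := by
  obtain ⟨t, rfl⟩ : ∃ t, Z₁ = -t := ⟨-Z₁, by ring⟩
  rw [neg_neg] at hZ₁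
  set D := circleDefect (-t) Z₂ with hDdef
  obtain ⟨hDl, hDu⟩ := abs_le.1 hD
  have hw : Z₂ ^ 2 = 2 * t - t ^ 2 + D := by rw [hDdef, circleDefect]; ring
  have ht₂ : t ≤ 2.001 := by nlinarith [sq_nonneg Z₂]
  -- `(8/5)|Z₂| ≤ Z₂² + 16/25` is nearly tight where `hpoly` is tightest, at `t ≈ 0.35`
  have hcube : κ * |Z₂| ^ 3 ≤ (55 / 48) * (Z₂ ^ 2 * (Z₂ ^ 2 + 16 / 25)) := by
    have := two_mul_mul_abs_pow_three_le (4 / 5) Z₂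
    nlinarith [pow_nonneg (abs_nonneg Z₂) 3]
  have hmono : Z₂ ^ 2 * (Z₂ ^ 2 + 16 / 25) ≤
      (2 * t - t ^ 2 + 1e-5) * (2 * t - t ^ 2 + 1e-5 + 16 / 25) := by
    have h0 := sq_nonneg Z₂
    gcongr <;> linarith
  have hpoly : (55 / 48) * ((2 * t - t ^ 2 + 1e-5) * (2 * t - t ^ 2 + 1e-5 + 16 / 25))
      + (4 / 3) * t ^ 3 + 3e-5 + 3e-3 * t ≤ 2 * t + 2 * t ^ 2 := by
    nlinarith [mul_nonneg (sub_nonneg.2 hZ₁) (sub_nonneg.2 ht₂),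
      mul_nonneg (mul_nonneg (sub_nonneg.2 hZ₁) (sub_nonneg.2 ht₂)) (sq_nonneg (t - 0.35)),
      mul_nonneg (sub_nonneg.2 hZ₁) (sq_nonneg (t - 0.35))]
  have hpen : η * ((-t) ^ 2 + Z₂ ^ 2) ≤ 1e-3 * (2 * t + 1e-5) := by
    have : (-t) ^ 2 + Z₂ ^ 2 = 2 * t + D := by rw [hw]; ring
    rw [this]
    exact mul_le_mul hη (by linarith) (by linarith) (by norm_num)
  have hdef : -D * (1 + 2 * t) ≤ 1e-5 * (1 + 2 * t) :=
    mul_le_mul_of_nonneg_right (by linarith) (by linarith)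
  have hbase : (-t) ^ 2 - Z₂ ^ 2 + 2 * (-t) * Z₂ ^ 2 + (2 / 3) * (-t) ^ 3
      = -2 * t - 2 * t ^ 2 + (4 / 3) * t ^ 3 - D * (1 + 2 * t) := by rw [hw]; ring
  unfold pMajorant
  linarith

lemma pMajorant_le_sq (hκ : κ ≤ 11 / 6) (hη : η ≤ 1e-3) (hD : |circleDefect Z₁ Z₂| ≤ 1e-5) :
    pMajorant κ η Z₁ Z₂ ≤ circleDefect Z₁ Z₂ ^ 2 := by
  by_cases hnear : |Z₁| ≤ 1 / 20 ∧ |Z₂| ≤ 1 / 20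
  · exact pMajorant_le_sq_of_near hκ hη hnear.1 hnear.2
  · have hD' := abs_le.1 hD
    have hdef : 2 * Z₁ = circleDefect Z₁ Z₂ - (Z₁ ^ 2 + Z₂ ^ 2) := by rw [circleDefect]; ring
    have hfar : 1 / 1000 ≤ -Z₁ := by
      rcases not_and_or.1 hnear with h | h <;> rw [not_le, lt_abs] at h
      · rcases h with h | h <;> nlinarith [sq_nonneg Z₂]
      · rcases h with h | h <;> nlinarith [sq_nonneg Z₁]
    exact (pMajorant_nonpos_of_far hκ hη hD hfar).trans (sq_nonneg _)
end

theorem stmt_4 (θ : ℝ) (hθ : θ = Real.sqrt (5 - Real.pi^2/3))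
    (E P : ℝ → ℝ → ℝ → ℝ)
    (hE : ∀ δ Z₁ Z₂, E δ Z₁ Z₂ = Z₁^2 + Z₂^2 + 2*Z₁)
    (hP : ∀ δ Z₁ Z₂, P δ Z₁ Z₂ =
      (1 + δ)*(Z₁^2 + Z₂^2) + 2*Z₁*Z₂^2 + (2/3)*Z₁^3
        + 6*δ*(abs Z₁ * Z₂^2 + abs Z₁ ^ 3)
        - 2*(1 - δ - ((2/3) + δ)*(21/20)*θ*Z₂)*Z₂^2) :
    ∃ δ₂ > (0:ℝ), ∃ δ₃ > (0:ℝ), ∀ δ : ℝ, 0 < δ → δ < δ₂ →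
      ∀ Z₁ Z₂ : ℝ, |E δ Z₁ Z₂| ≤ δ₃ →
        P δ Z₁ Z₂ - (1/δ) * |E δ Z₁ Z₂|^2 ≤ 0 := by
  refine ⟨1e-5, by norm_num, 1e-5, by norm_num, fun δ hδ₀ hδ Z₁ Z₂ hD => ?_⟩
  have hED : E δ Z₁ Z₂ = circleDefect Z₁ Z₂ := hE δ Z₁ Z₂
  rw [hED] at hD ⊢
  rw [hP, sq_abs]
  have hθ₀ : 0 ≤ θ := hθ ▸ sqrt_nonneg _
  have hθ₁ : θ ≤ 55 / 42 := hθ ▸ sqrt_five_sub_pi_sq_div_three_le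
  obtain ⟨h₁, h₂⟩ :=
    abs_le_three_of_circleDefect_le_one (by linarith [le_abs_self (circleDefect Z₁ Z₂)])
  have hmaj := le_pMajorant hδ₀.le hθ₀ (by linarith) h₁ h₂
  have hsq := pMajorant_le_sq (κ := (7 / 5) * θ) (η := 40 * δ) (by linarith) (by linarith) hD
  have hpen : circleDefect Z₁ Z₂ ^ 2 ≤ (1 / δ) * circleDefect Z₁ Z₂ ^ 2 :=
    le_mul_of_one_le_left (sq_nonneg _) ((one_le_div hδ₀).2 (by linarith))
  linarith
end

section
/- Let E(Z₁,Z₂) = Z₁² + Z₂² + 2Z₁. If E(Z₁,Z₂) = 0 and Z₁ ≠ 0, then P₀(Z₁,Z₂) := Z₁² + Z₂² + 2Z₁Z₂² + (2/3)Z₁³ - 2(1 - (7/10)θZ₂)Z₂² < 0, where θ = sqrt(5-π²/3). (Under E=0, P₀ reduces to 2Z₁ - 2Z₁² - (4/3)Z₁³ + (7/5)θ(-Z₁²-2Z₁)^{3/2} when Z₂ = sqrt(-Z₁²-2Z₁) ≥ 0.) -/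
open Real

/-!
On `E = 0` put `t = -Z₁ ∈ (0, 2]`; then `Z₂² = t (2 - t)` and
`P₀ = (7/5) θ Z₂³ - (2t + 2t² - (4/3)t³)`. The cubic is positive on `(0, 2]`, so it suffices to
compare squares: `(7/5 θ)² < 3.352` (from `π > 3.141592`), and `3.352 (t (2 - t))³` stays below the
squared cubic on `(0, 2]`, a polynomial inequality.
-/

lemma seven_fifths_mul_sqrt_five_sub_pi_sq_div_three_sq_lt :
    ((7/5) * √(5 - π^2/3))^2 < 3.352 := by
  have hπ : (3.141592 : ℝ) < π := pi_gt_d6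
  have hπ3 : π < 3.141593 := pi_lt_d6
  rw [mul_pow, sq_sqrt (by nlinarith)]
  nlinarith

lemma cube_mul_two_sub_lt_sq {t : ℝ} (h0 : 0 < t) (h2 : t ≤ 2) :
    3.352 * (t*(2-t))^3 < (2*t + 2*t^2 - (4/3)*t^3)^2 := by
  have h2' : 0 ≤ 2 - t := sub_nonneg.mpr h2
  nlinarith [mul_nonneg (mul_nonneg h0.le h0.le) h2', mul_nonneg (mul_nonneg h0.le h2') h2',
    mul_nonneg (mul_nonneg h0.le h0.le) (sq_nonneg (t-1/3)),
    mul_nonneg (mul_nonneg h0.le h2') (sq_nonneg (t-1/3))]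

lemma mul_pow_three_lt_of_sq_eq {k s t : ℝ} (hk : k^2 < 3.352) (h0 : 0 < t) (h2 : t ≤ 2)
    (hs : s^2 = t*(2-t)) : k * s^3 < 2*t + 2*t^2 - (4/3)*t^3 := by
  have hu : 0 ≤ t*(2-t) := mul_nonneg h0.le (by linarith)
  have hR : 0 ≤ 2*t + 2*t^2 - (4/3)*t^3 := by nlinarith [mul_nonneg hu h0.le]
  refine lt_of_pow_lt_pow_left₀ 2 hR ?_
  calc (k * s^3)^2 = k^2 * (t*(2-t))^3 := by rw [← hs]; ring
    _ ≤ 3.352 * (t*(2-t))^3 := by gcongr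
    _ < _ := cube_mul_two_sub_lt_sq h0 h2

theorem stmt_5 (θ : ℝ) (hθ : θ = Real.sqrt (5 - Real.pi^2/3))
    (Z₁ Z₂ : ℝ) (hE : Z₁^2 + Z₂^2 + 2*Z₁ = 0) (hZ₁ : Z₁ ≠ 0) :
    Z₁^2 + Z₂^2 + 2*Z₁*Z₂^2 + (2/3)*Z₁^3 - 2*(1 - (7/10)*θ*Z₂)*Z₂^2 < 0 := by
  have hneg : Z₁ < 0 := hZ₁.lt_of_le (by nlinarith [sq_nonneg Z₂])
  have hkey := mul_pow_three_lt_of_sq_eq (hθ ▸ seven_fifths_mul_sqrt_five_sub_pi_sq_div_three_sq_lt)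
    (neg_pos.mpr hneg) (by nlinarith [sq_nonneg Z₂]) (s := Z₂) (by linear_combination hE)
  linear_combination (2*Z₁ - 1) * hE + hkey
end

section
/- Let Q : 𝐋 → ℝ, Q(s) := ∫_ℝ |ũ(ξ+s) - ũ(ξ)|² dξ, where ũ : ℝ → ℝ is C¹, strictly decreasing with integrable square-integrable derivative and limits u_± at ±∞. Then Q is even, Q(0)=0, and there exist β₁, β₂ > 0 such that ∂_s Q(s) ≥ β₁ for s > 1 and ∂_s Q(s) ≤ -β₂ for s < -1; consequently |s| ≤ Q(s)/min(β₁,β₂) + 1 for all s ∈ ℝ. -/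
/-!
Write `Q(s) = ∫ (u(ξ + s) - u ξ)²`. For `1 ≤ s₁ ≤ s₂`, factoring the difference of squares and
writing `u(ξ + s₂) - u(ξ + s₁) = ∫_{s₁}^{s₂} u'(ξ + t) dt` gives, after Fubini and a translation,
`Q(s₂) - Q(s₁) = ∫_{s₁}^{s₂} ∫ u'(ζ) w(ζ - t) dζ dt` with `w = u(· + s₁) + u(· + s₂) - 2u ≤ 0`.
Since `u' ≤ 0` and the window `[ζ - t, ζ - t + s₂]` contains `[ζ - 1, ζ]`, the inner integral is at
least `β = ∫ u'(ζ) (u ζ - u(ζ - 1)) dζ`, which is positive because `u` is strictly decreasing.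
Hence `Q(s) - β s` is monotone on `[1, ∞)`; evenness of `Q` handles `s ≤ -1`.
-/

open Real MeasureTheory Set

noncomputable def shiftEnergy (u : ℝ → ℝ) (s : ℝ) : ℝ := ∫ ξ, (u (ξ + s) - u ξ) ^ 2

theorem shiftEnergy_zero (u : ℝ → ℝ) : shiftEnergy u 0 = 0 := by
  simp [shiftEnergy]

theorem shiftEnergy_nonneg (u : ℝ → ℝ) (s : ℝ) : 0 ≤ shiftEnergy u s :=
  integral_nonneg fun _ => sq_nonneg _

theorem shiftEnergy_neg (u : ℝ → ℝ) (s : ℝ) : shiftEnergy u (-s) = shiftEnergy u s := by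
  rw [shiftEnergy, ← integral_add_right_eq_self _ s, shiftEnergy]
  congr 1 with ξ
  rw [add_neg_cancel_right]
  ring

section

variable {u u' : ℝ → ℝ}

theorem abs_sub_le_integral_norm_of_hasDerivAt (hu : ∀ x, HasDerivAt u (u' x) x)
    (hu'i : Integrable u') (x y : ℝ) : |u y - u x| ≤ ∫ t, ‖u' t‖ := by
  rw [← intervalIntegral.integral_eq_sub_of_hasDerivAt (fun t _ => hu t) hu'i.intervalIntegrable]
  exact intervalIntegral.norm_integral_le_integral_norm_uIoc.trans
    (setIntegral_le_integral hu'i.norm (ae_of_all _ fun _ => norm_nonneg _))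

theorem integral_sub_comp_add_mul_eq_setIntegral (hu : ∀ x, HasDerivAt u (u' x) x)
    (hu'c : Continuous u') (hu'i : Integrable u') {w : ℝ → ℝ} (hwc : Continuous w) {C : ℝ}
    (hwC : ∀ x, |w x| ≤ C) {s₁ s₂ : ℝ} (hs : s₁ ≤ s₂) :
    Integrable (fun ξ => (u (ξ + s₂) - u (ξ + s₁)) * w ξ) ∧
      IntegrableOn (fun t => ∫ ξ, u' (ξ + t) * w ξ) (Ioc s₁ s₂) ∧
      ∫ ξ, (u (ξ + s₂) - u (ξ + s₁)) * w ξ = ∫ t in Ioc s₁ s₂, ∫ ξ, u' (ξ + t) * w ξ := by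
  set F : ℝ → ℝ → ℝ := fun ξ t => u' (ξ + t) * w ξ
  have hFc : Continuous (Function.uncurry F) :=
    (hu'c.comp continuous_add).mul (hwc.comp continuous_fst)
  have hslice_le : ∀ t, ∫ ξ, ‖F ξ t‖ ≤ C * ∫ x, ‖u' x‖ := by
    intro t
    calc ∫ ξ, ‖F ξ t‖ ≤ ∫ ξ, C * ‖u' (ξ + t)‖ := by
          refine integral_mono_of_nonneg (ae_of_all _ fun _ => norm_nonneg _)
            ((hu'i.comp_add_right t).norm.const_mul C) (ae_of_all _ fun ξ => ?_)
          show ‖u' (ξ + t) * w ξ‖ ≤ C * ‖u' (ξ + t)‖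
          rw [norm_mul, mul_comm]
          exact mul_le_mul_of_nonneg_right (hwC ξ) (norm_nonneg _)
      _ = C * ∫ x, ‖u' x‖ := by
          rw [integral_const_mul, integral_add_right_eq_self (fun x => ‖u' x‖) t]
  have hF : Integrable (Function.uncurry F) (volume.prod (volume.restrict (Ioc s₁ s₂))) := by
    refine (integrable_prod_iff' hFc.aestronglyMeasurable).2 ⟨ae_of_all _ fun t => ?_, ?_⟩
    · exact (hu'i.comp_add_right t).mul_bdd hwc.aestronglyMeasurable
        (ae_of_all _ fun ξ => (hwC ξ))
    · refine Integrable.of_bound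
        (hFc.norm.comp continuous_swap).aestronglyMeasurable.integral_prod_right'
        (C * ∫ x, ‖u' x‖) (ae_of_all _ fun t => ?_)
      rw [norm_of_nonneg (integral_nonneg fun _ => norm_nonneg _)]
      exact hslice_le t
  have hFTC : ∀ ξ, u (ξ + s₂) - u (ξ + s₁) = ∫ t in Ioc s₁ s₂, u' (ξ + t) := by
    intro ξ
    rw [← intervalIntegral.integral_of_le hs, intervalIntegral.integral_comp_add_left u' ξ,
      intervalIntegral.integral_eq_sub_of_hasDerivAt (fun x _ => hu x)
        (hu'c.intervalIntegrable _ _), add_comm ξ, add_comm ξ]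
  have hfun : (fun ξ => (u (ξ + s₂) - u (ξ + s₁)) * w ξ) =
      fun ξ => ∫ t in Ioc s₁ s₂, F ξ t := by
    ext ξ
    rw [hFTC, integral_mul_const]
  rw [hfun]
  exact ⟨hF.integral_prod_left, hF.integral_prod_right, integral_integral_swap hF⟩

theorem integrable_sq_sub_comp_add (hu : ∀ x, HasDerivAt u (u' x) x) (hu'c : Continuous u')
    (hu'i : Integrable u') {s : ℝ} (hs : 0 ≤ s) : Integrable fun ξ => (u (ξ + s) - u ξ) ^ 2 := by
  have hu_cont : Continuous u := continuous_iff_continuousAt.2 fun x => (hu x).continuousAt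
  have h := (integral_sub_comp_add_mul_eq_setIntegral hu hu'c hu'i
    (w := fun ξ => u (ξ + s) - u ξ) (by fun_prop)
    (fun ξ => abs_sub_le_integral_norm_of_hasDerivAt hu hu'i ξ (ξ + s)) hs).1
  simpa only [add_zero, ← sq] using h

theorem shiftEnergy_add_mul_le (hu : ∀ x, HasDerivAt u (u' x) x) (hu'c : Continuous u')
    (hu'i : Integrable u') (hanti : Antitone u) {s₁ s₂ : ℝ} (h₁ : 1 ≤ s₁) (h₁₂ : s₁ ≤ s₂) :
    shiftEnergy u s₁ + (∫ ζ, u' ζ * (u ζ - u (ζ - 1))) * (s₂ - s₁) ≤ shiftEnergy u s₂ := by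
  have hu_cont : Continuous u := continuous_iff_continuousAt.2 fun x => (hu x).continuousAt
  have hosc := abs_sub_le_integral_norm_of_hasDerivAt hu hu'i
  set C := ∫ t, ‖u' t‖
  set w : ℝ → ℝ := fun ξ => u (ξ + s₁) + u (ξ + s₂) - 2 * u ξ
  have hwc : Continuous w := by fun_prop
  have hwC : ∀ ξ, |w ξ| ≤ 2 * C := by
    intro ξ
    have h₁ := hosc ξ (ξ + s₁)
    have h₂ := hosc ξ (ξ + s₂)
    rw [show w ξ = (u (ξ + s₁) - u ξ) + (u (ξ + s₂) - u ξ) by simp only [w]; ring]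
    exact (abs_add_le _ _).trans (by linarith)
  obtain ⟨-, hinner_int, hswap⟩ :=
    integral_sub_comp_add_mul_eq_setIntegral hu hu'c hu'i hwc hwC h₁₂
  have hdiff : shiftEnergy u s₂ - shiftEnergy u s₁ = ∫ ξ, (u (ξ + s₂) - u (ξ + s₁)) * w ξ := by
    rw [shiftEnergy, shiftEnergy, ← integral_sub (integrable_sq_sub_comp_add hu hu'c hu'i
      (by linarith)) (integrable_sq_sub_comp_add hu hu'c hu'i (by linarith))]
    congr 1 with ξ
    ring
  have hinner : ∀ t ∈ Ioc s₁ s₂,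
      ∫ ζ, u' ζ * (u ζ - u (ζ - 1)) ≤ ∫ ξ, u' (ξ + t) * w ξ := by
    intro t ht
    have hshift : ∫ ξ, u' (ξ + t) * w ξ = ∫ ζ, u' ζ * w (ζ - t) := by
      rw [← integral_add_right_eq_self (fun ζ => u' ζ * w (ζ - t)) t]
      simp only [add_sub_cancel_right]
    rw [hshift]
    refine integral_mono (hu'i.mul_bdd (by fun_prop) (ae_of_all _ fun ζ => hosc (ζ - 1) ζ))
      (hu'i.mul_bdd (by fun_prop) (ae_of_all _ fun ζ => hwC (ζ - t))) fun ζ => ?_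
    have h₁ : u (ζ - 1) ≤ u (ζ - t) := hanti (by linarith [ht.1])
    have h₂ : u (ζ - t + s₂) ≤ u ζ := hanti (by linarith [ht.2])
    have h₃ : u (ζ - t + s₁) ≤ u (ζ - t) := hanti (by linarith)
    exact mul_le_mul_of_nonpos_left (by simp only [w]; linarith)
      ((hu ζ).nonpos_of_antitone hanti)
  have := setIntegral_ge_of_const_le_real measurableSet_Ioc measure_Ioc_lt_top.ne hinner hinner_int
  rw [volume_real_Ioc_of_le h₁₂] at this
  linarith

theorem integral_deriv_mul_sub_pos (hu : ∀ x, HasDerivAt u (u' x) x) (hu'c : Continuous u')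
    (hu'i : Integrable u') (hanti : StrictAnti u) : 0 < ∫ ζ, u' ζ * (u ζ - u (ζ - 1)) := by
  have hu_cont : Continuous u := continuous_iff_continuousAt.2 fun x => (hu x).continuousAt
  obtain ⟨x, hx⟩ : ∃ x, u' x ≠ 0 := by
    by_contra! h
    exact (hanti zero_lt_one).ne <| is_const_of_deriv_eq_zero
      (fun x => (hu x).differentiableAt) (fun x => (hu x).deriv.trans (h x)) 1 0
  refine integral_pos_of_integrable_nonneg_nonzero (x := x) (by fun_prop)
    (hu'i.mul_bdd (by fun_prop)
      (ae_of_all _ fun ζ => abs_sub_le_integral_norm_of_hasDerivAt hu hu'i (ζ - 1) ζ))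
    (fun ζ => mul_nonneg_of_nonpos_of_nonpos ((hu ζ).nonpos_of_antitone hanti.antitone)
      (sub_nonpos.2 (hanti.antitone (sub_one_lt ζ).le)))
    (mul_ne_zero hx (sub_ne_zero.2 (hanti (sub_one_lt x)).ne))

theorem exists_pos_monotoneOn_shiftEnergy_sub_mul (hu : ∀ x, HasDerivAt u (u' x) x)
    (hu'c : Continuous u') (hu'i : Integrable u') (hanti : StrictAnti u) :
    ∃ β > 0, MonotoneOn (fun s => shiftEnergy u s - β * s) (Ici 1) :=
  ⟨_, integral_deriv_mul_sub_pos hu hu'c hu'i hanti, fun s₁ h₁ s₂ _ h₁₂ => by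
    have := shiftEnergy_add_mul_le hu hu'c hu'i hanti.antitone h₁ h₁₂
    simp only
    linarith⟩

end

theorem le_of_hasDerivAt_of_monotoneOn_sub_mul {f : ℝ → ℝ} {a β d s : ℝ}
    (hmono : MonotoneOn (fun x => f x - β * x) (Ici a)) (hs : a ≤ s) (hd : HasDerivAt f d s) :
    β ≤ d := by
  have := ((hd.sub ((hasDerivAt_id s).const_mul β)).hasDerivWithinAt (s := Ici a)
    ).nonneg_of_monotoneOn (uniqueDiffOn_Ici a s hs).accPt hmono
  simp only [mul_one] at this
  linarith

theorem abs_le_div_add_one_of_monotoneOn_sub_mul {f : ℝ → ℝ} {β : ℝ} (hβ : 0 < β)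
    (hf : Function.Even f) (hf₀ : ∀ s, 0 ≤ f s)
    (hmono : MonotoneOn (fun x => f x - β * x) (Ici 1)) (s : ℝ) : |s| ≤ f s / β + 1 := by
  rcases le_or_gt |s| 1 with hs | hs
  · linarith [div_nonneg (hf₀ s) hβ.le]
  have hgrow : f 1 - β * 1 ≤ f |s| - β * |s| := hmono self_mem_Ici hs.le hs.le
  have hfs : f |s| = f s := by rcases abs_choice s with h | h <;> rw [h]; exact hf s
  rw [← sub_le_iff_le_add, le_div_iff₀ hβ, ← hfs]
  linarith [hf₀ 1]

theorem stmt_19_general (u : ℝ → ℝ)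
    (hC1 : ContDiff ℝ 1 u) (hanti : StrictAnti u)
    (hint : Integrable (deriv u))
    (Q : ℝ → ℝ) (hQ : ∀ s, Q s = ∫ ξ : ℝ, (u (ξ + s) - u ξ)^2) :
    (∀ s, Q s = Q (-s)) ∧ Q 0 = 0 ∧
    ∃ β₁ > (0:ℝ), ∃ β₂ > (0:ℝ),
      (∀ s : ℝ, 1 < s → ∀ d : ℝ, HasDerivAt Q d s → β₁ ≤ d) ∧
      (∀ s : ℝ, s < -1 → ∀ d : ℝ, HasDerivAt Q d s → d ≤ -β₂) ∧
      (∀ s : ℝ, |s| ≤ Q s / min β₁ β₂ + 1) := by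
  obtain rfl : Q = shiftEnergy u := funext hQ
  obtain ⟨β, hβ, hmono⟩ := exists_pos_monotoneOn_shiftEnergy_sub_mul
    (fun x => (hC1.differentiable one_ne_zero x).hasDerivAt) (hC1.continuous_deriv le_rfl) hint
    hanti
  refine ⟨fun s => (shiftEnergy_neg u s).symm, shiftEnergy_zero u, β, hβ, β, hβ,
    fun s hs d hd => le_of_hasDerivAt_of_monotoneOn_sub_mul hmono hs.le hd, fun s hs d hd => ?_,
    fun s => ?_⟩
  · rw [← neg_neg s] at hd
    have hd' := hd.comp (-s) (hasDerivAt_neg (-s))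
    rw [show shiftEnergy u ∘ Neg.neg = shiftEnergy u from funext (shiftEnergy_neg u)] at hd'
    linarith [le_of_hasDerivAt_of_monotoneOn_sub_mul hmono (by linarith) hd']
  · rw [min_self]
    exact abs_le_div_add_one_of_monotoneOn_sub_mul hβ (shiftEnergy_neg u) (shiftEnergy_nonneg u)
      hmono s

theorem stmt_19 (u : ℝ → ℝ) (uminus uplus : ℝ)
    (hC1 : ContDiff ℝ 1 u) (hanti : StrictAnti u)
    (hint : Integrable (deriv u)) (hL2 : MemLp (deriv u) 2 volume)
    (htop : Filter.Tendsto u Filter.atTop (nhds uplus))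
    (hbot : Filter.Tendsto u Filter.atBot (nhds uminus))
    (Q : ℝ → ℝ) (hQ : ∀ s, Q s = ∫ ξ : ℝ, (u (ξ + s) - u ξ)^2) :
    (∀ s, Q s = Q (-s)) ∧ Q 0 = 0 ∧
    ∃ β₁ > (0:ℝ), ∃ β₂ > (0:ℝ),
      (∀ s : ℝ, 1 < s → ∀ d : ℝ, HasDerivAt Q d s → β₁ ≤ d) ∧
      (∀ s : ℝ, s < -1 → ∀ d : ℝ, HasDerivAt Q d s → d ≤ -β₂) ∧
      (∀ s : ℝ, |s| ≤ Q s / min β₁ β₂ + 1) :=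
  stmt_19_general u hC1 hanti hint Q hQ
end
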